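/- arXiv:1908.07247 — 5 statements merged into one kernel-verified Lean document; each statement's English description precedes it below -/
import Mathlib

section
/- Let J ∈ ℝ^{m×n} be a matrix with full column rank (i.e., its columns are linearly independent, equivalently x ↦ Jx is injective), b ∈ ℝ^m, and p, q, z, Δz, Λ_p, Λ_q ∈ ℝⁿ with p ≤ z ≤ q componentwise. Suppose the KKT conditions of the BVLS subproblem hold: Jᵀ(JΔz + b) + Λ_q − Λ_p = 0; p − z ≤ Δz ≤ q − z componentwise; Λ_p ≥ 0 and Λ_q ≥ 0 componentwise; and for every coordinate j, Λ_q(j)·(Δz(j) − (q(j) − z(j))) = 0 and Λ_p(j)·((p(j) − z(j)) − Δz(j)) = 0. If Δz ≠ 0, then ⟨b, JΔz⟩ < 0. -/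
/-!
Write `r = JΔz + b`. Pairing the stationarity condition `Jᵀr = Λp - Λq` with `Δz` gives
`‖JΔz‖² + ⟨b, JΔz⟩ = ⟨Δz, Λp - Λq⟩`. By complementarity, `Λp_j Δz_j = Λp_j (p_j - z_j) ≤ 0` and
`Λq_j Δz_j = Λq_j (q_j - z_j) ≥ 0`, so the right side is `≤ 0`, while `‖JΔz‖² > 0` because `J` is
injective and `Δz ≠ 0`.
-/

open scoped RealInnerProductSpace
open Matrix

/-- Identification of a vector `Fin k → ℝ` with a point of Euclidean space (they are
definitionally equal; this is just a type-level cast). -/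
def toEuc {k : ℕ} (x : Fin k → ℝ) : EuclideanSpace ℝ (Fin k) := WithLp.toLp 2 x

namespace Matrix

variable {ι κ R : Type*} [Fintype ι] [Fintype κ]
  [CommRing R] [LinearOrder R] [IsStrictOrderedRing R]

theorem dotProduct_sub_nonpos_of_complementary {p q z d μ ν : ι → R}
    (hbox : ∀ j, p j ≤ z j ∧ z j ≤ q j) (hμ : ∀ j, 0 ≤ μ j) (hν : ∀ j, 0 ≤ ν j)
    (hν_compl : ∀ j, ν j * (d j - (q j - z j)) = 0)
    (hμ_compl : ∀ j, μ j * ((p j - z j) - d j) = 0) :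
    d ⬝ᵥ (μ - ν) ≤ 0 := by
  refine Finset.sum_nonpos fun j _ => ?_
  have hμd : μ j * d j = μ j * (p j - z j) := by linear_combination -hμ_compl j
  have hνd : ν j * d j = ν j * (q j - z j) := by linear_combination hν_compl j
  have hμd_nonpos : μ j * d j ≤ 0 :=
    hμd ▸ mul_nonpos_of_nonneg_of_nonpos (hμ j) (sub_nonpos.2 (hbox j).1)
  have hνd_nonneg : 0 ≤ ν j * d j := hνd ▸ mul_nonneg (hν j) (sub_nonneg.2 (hbox j).2)
  show d j * (μ j - ν j) ≤ 0
  rw [mul_sub, mul_comm (d j), mul_comm (d j)]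
  linarith

theorem dotProduct_mulVec_neg_of_transpose_mulVec_eq {J : Matrix κ ι R}
    (hJ : Function.Injective J.mulVec) {b : κ → R} {d μ : ι → R}
    (hnormal : Jᵀ *ᵥ (J *ᵥ d + b) = μ) (hdμ : d ⬝ᵥ μ ≤ 0) (hd : d ≠ 0) :
    b ⬝ᵥ J *ᵥ d < 0 := by
  have hsplit : d ⬝ᵥ μ = (J *ᵥ d) ⬝ᵥ (J *ᵥ d) + b ⬝ᵥ J *ᵥ d := by
    rw [← hnormal, dotProduct_mulVec, vecMul_transpose, dotProduct_add, dotProduct_comm b]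
  have hJd : J *ᵥ d ≠ 0 := fun h => hd (hJ (h.trans (mulVec_zero J).symm))
  have hpos : 0 < (J *ᵥ d) ⬝ᵥ (J *ᵥ d) :=
    lt_of_le_of_ne (Finset.sum_nonneg fun i _ => mul_self_nonneg _)
      (Ne.symm (dotProduct_self_eq_zero.not.2 hJd))
  linarith

end Matrix

theorem bvls_descent_direction_general (m n : ℕ) (J : Matrix (Fin m) (Fin n) ℝ)
    (hrank : Function.Injective fun x : Fin n → ℝ => J.mulVec x)
    (b : EuclideanSpace ℝ (Fin m)) (p q z Δz Λp Λq : EuclideanSpace ℝ (Fin n))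
    (hbox : ∀ j, p j ≤ z j ∧ z j ≤ q j)
    (hstat : toEuc (Jᵀ.mulVec (toEuc (J.mulVec Δz) + b)) + Λq - Λp = 0)
    (hΛp : ∀ j, 0 ≤ Λp j) (hΛq : ∀ j, 0 ≤ Λq j)
    (hcompq : ∀ j, Λq j * (Δz j - (q j - z j)) = 0)
    (hcompp : ∀ j, Λp j * ((p j - z j) - Δz j) = 0)
    (hΔz : Δz ≠ 0) :
    ⟪b, toEuc (J.mulVec Δz)⟫ < 0 := by
  have hnormal : Jᵀ *ᵥ (J *ᵥ Δz + b) = Λp - Λq := by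
    ext j
    have hj := congrArg (fun x : EuclideanSpace ℝ (Fin n) => x j) hstat
    simp only [toEuc, PiLp.sub_apply, PiLp.add_apply, PiLp.zero_apply, WithLp.ofLp_toLp] at hj
    simp only [Pi.sub_apply]
    linarith
  rw [EuclideanSpace.inner_eq_star_dotProduct, star_trivial, toEuc, WithLp.ofLp_toLp,
    dotProduct_comm]
  exact dotProduct_mulVec_neg_of_transpose_mulVec_eq hrank hnormal
    (dotProduct_sub_nonpos_of_complementary hbox hΛp hΛq hcompq hcompp)
    (fun h => hΔz (WithLp.ofLp_injective 2 h))

/-- Lemma 2 (descent direction): if `J` has full column rank, `p ≤ z ≤ q`, the KKT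
conditions of the BVLS subproblem `min_{p−z ≤ Δẑ ≤ q−z} ‖JΔẑ + b‖²` hold at `Δz` with
multipliers `Λ_p, Λ_q`, and `Δz ≠ 0`, then `⟨b, JΔz⟩ < 0`. -/
theorem bvls_descent_direction (m n : ℕ) (J : Matrix (Fin m) (Fin n) ℝ)
    (hrank : Function.Injective fun x : Fin n → ℝ => J.mulVec x)
    (b : EuclideanSpace ℝ (Fin m)) (p q z Δz Λp Λq : EuclideanSpace ℝ (Fin n))
    (hbox : ∀ j, p j ≤ z j ∧ z j ≤ q j)
    (hstat : toEuc (Jᵀ.mulVec (toEuc (J.mulVec Δz) + b)) + Λq - Λp = 0)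
    (hfeas : ∀ j, p j - z j ≤ Δz j ∧ Δz j ≤ q j - z j)
    (hΛp : ∀ j, 0 ≤ Λp j) (hΛq : ∀ j, 0 ≤ Λq j)
    (hcompq : ∀ j, Λq j * (Δz j - (q j - z j)) = 0)
    (hcompp : ∀ j, Λp j * ((p j - z j) - Δz j) = 0)
    (hΔz : Δz ≠ 0) :
    ⟪b, toEuc (J.mulVec Δz)⟫ < 0 :=
  bvls_descent_direction_general m n J hrank b p q z Δz Λp Λq hbox hstat hΛp hΛq hcompq hcompp hΔz
end

section
/- Let r : ℝⁿ → ℝ^m be differentiable at z with derivative the linear map x ↦ Jx for a matrix J ∈ ℝ^{m×n} of full column rank, and set b = r(z) and f(x) = (1/2)‖r(x)‖². Let p, q, Δz, Λ_p, Λ_q satisfy: p ≤ z ≤ q componentwise; Jᵀ(JΔz + b) + Λ_q − Λ_p = 0; p − z ≤ Δz ≤ q − z componentwise; Λ_p ≥ 0 and Λ_q ≥ 0 componentwise; Λ_q(j)·(Δz(j) − (q(j) − z(j))) = 0 and Λ_p(j)·((p(j) − z(j)) − Δz(j)) = 0 for every coordinate j; and Δz ≠ 0. Then for every c ∈ (0,1)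 there exists α with 0 < α ≤ 1 such that f(z + α·Δz) − f(z) < c·α·⟨r(z), JΔz⟩. -/
/-!
Where a multiplier is positive, complementary slackness puts `z + Δz` on the corresponding
bound, so `Δz` points from `z` towards it and `(Λp − Λq) ⬝ Δz ≤ 0`. By stationarity this
is `⟨JΔz + b, JΔz⟩ ≤ 0`, and as `JΔz ≠ 0` (full column rank) the directional derivative
`⟨r(z), JΔz⟩ ≤ -‖JΔz‖²` of `f` along `Δz` is negative. So it is strictly below
`c · ⟨r(z), JΔz⟩`, and for small `α > 0` so are the difference quotients of `f` along `Δz`.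
-/

open scoped RealInnerProductSpace
open Matrix

open Filter Topology

theorem HasDerivAt.exists_armijo_step {g : ℝ → ℝ} {D c : ℝ} (hg : HasDerivAt g D 0)
    (hD : D < 0) (hc : c < 1) : ∃ α, 0 < α ∧ α ≤ 1 ∧ g α - g 0 < c * α * D := by
  have hslope : ∀ᶠ t in 𝓝[>] 0, t⁻¹ • (g (0 + t) - g 0) < c * D :=
    hg.tendsto_slope_zero_right.eventually_lt_const (by nlinarith)
  obtain ⟨α, hα, ⟨hα0, hα1⟩⟩ := (hslope.and (Ioc_mem_nhdsGT zero_lt_one)).exists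
  refine ⟨α, hα0, hα1, ?_⟩
  rw [zero_add, smul_eq_mul, inv_mul_lt_iff₀ hα0] at hα
  linarith

theorem HasFDerivAt.hasDerivAt_half_norm_sq_comp_add_smul {E F : Type*} [NormedAddCommGroup E]
    [NormedSpace ℝ E] [NormedAddCommGroup F] [InnerProductSpace ℝ F] {r : E → F}
    {r' : E →L[ℝ] F} {z : E} (hr : HasFDerivAt r r' z) (d : E) :
    HasDerivAt (fun α : ℝ => (1 / 2 : ℝ) * ‖r (z + α • d)‖ ^ 2) ⟪r z, r' d⟫ 0 := by
  have hline : HasDerivAt (fun α : ℝ => z + α • d) d 0 := by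
    simpa using ((hasDerivAt_id (0 : ℝ)).smul_const d).const_add z
  have hr' : HasFDerivAt r r' (z + (0 : ℝ) • d) := by simpa using hr
  simpa using ((hr'.comp_hasDerivAt 0 hline).norm_sq).const_mul (1 / 2 : ℝ)

theorem sub_mul_nonpos_of_complementary_slackness {μp μq p q z d : ℝ} (hp : p ≤ z)
    (hq : z ≤ q) (hμp : 0 ≤ μp) (hμq : 0 ≤ μq) (hcq : μq * (d - (q - z)) = 0)
    (hcp : μp * ((p - z) - d) = 0) : (μp - μq) * d ≤ 0 := by
  have hactive : (μp - μq) * d = μp * (p - z) - μq * (q - z) := by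
    linear_combination -hcp - hcq
  rw [hactive, sub_nonpos]
  exact (mul_nonpos_of_nonneg_of_nonpos hμp (sub_nonpos.2 hp)).trans
    (mul_nonneg hμq (sub_nonneg.2 hq))

theorem Matrix.dotProduct_mulVec_neg_of_transpose_mulVec_eq_s10 {ι κ : Type*} [Fintype ι]
    [Fintype κ] {J : Matrix κ ι ℝ} {b : κ → ℝ} {d μ : ι → ℝ} (hstat : Jᵀ *ᵥ (J *ᵥ d + b) = μ)
    (hμ : μ ⬝ᵥ d ≤ 0) (hJd : J *ᵥ d ≠ 0) : b ⬝ᵥ J *ᵥ d < 0 := by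
  have hres : (J *ᵥ d + b) ⬝ᵥ J *ᵥ d = μ ⬝ᵥ d := by
    rw [dotProduct_mulVec, ← mulVec_transpose, hstat]
  have hpos : 0 < J *ᵥ d ⬝ᵥ J *ᵥ d :=
    lt_of_le_of_ne (by simpa using dotProduct_self_star_nonneg (J *ᵥ d))
      (Ne.symm (dotProduct_self_eq_zero.not.mpr hJd))
  rw [add_dotProduct] at hres
  linarith

theorem bvnlls_global_convergence_general (n m : ℕ)
    (r : EuclideanSpace ℝ (Fin n) → EuclideanSpace ℝ (Fin m))
    (z : EuclideanSpace ℝ (Fin n))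
    (J : Matrix (Fin m) (Fin n) ℝ)
    (J' : EuclideanSpace ℝ (Fin n) →L[ℝ] EuclideanSpace ℝ (Fin m))
    (hJ' : ∀ x, J' x = toEuc (J.mulVec x))
    (hder : HasFDerivAt r J' z)
    (hrank : Function.Injective fun x : Fin n → ℝ => J.mulVec x)
    (b : EuclideanSpace ℝ (Fin m)) (hb : b = r z)
    (f : EuclideanSpace ℝ (Fin n) → ℝ) (hf : ∀ x, f x = (1 / 2 : ℝ) * ‖r x‖ ^ 2)
    (p q Δz Λp Λq : EuclideanSpace ℝ (Fin n))
    (hbox : ∀ j, p j ≤ z j ∧ z j ≤ q j)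
    (hstat : toEuc (Jᵀ.mulVec (toEuc (J.mulVec Δz) + b)) + Λq - Λp = 0)
    (hΛp : ∀ j, 0 ≤ Λp j) (hΛq : ∀ j, 0 ≤ Λq j)
    (hcompq : ∀ j, Λq j * (Δz j - (q j - z j)) = 0)
    (hcompp : ∀ j, Λp j * ((p j - z j) - Δz j) = 0)
    (hΔz : Δz ≠ 0)
    (c : ℝ) (hc1 : c < 1) :
    ∃ α : ℝ, 0 < α ∧ α ≤ 1 ∧
      f (z + α • Δz) - f z < c * α * ⟪r z, toEuc (J.mulVec Δz)⟫ := by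
  have hnormal : Jᵀ *ᵥ (J *ᵥ Δz + b) = Λp - Λq := by
    have h := congrArg WithLp.ofLp hstat
    simp only [toEuc, WithLp.ofLp_sub, WithLp.ofLp_add, WithLp.ofLp_zero] at h
    linear_combination h
  have hmult : ⇑(Λp - Λq) ⬝ᵥ Δz ≤ 0 := Finset.sum_nonpos fun j _ =>
    sub_mul_nonpos_of_complementary_slackness (hbox j).1 (hbox j).2 (hΛp j) (hΛq j)
      (hcompq j) (hcompp j)
  have hJΔz : J *ᵥ Δz ≠ 0 := by
    simpa using hrank.ne ((WithLp.ofLp_eq_zero (p := 2)).not.mpr hΔz)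
  have hdescent : ⟪r z, toEuc (J *ᵥ Δz)⟫ < 0 := by
    rw [← hb, toEuc, EuclideanSpace.inner_eq_star_dotProduct, dotProduct_comm]
    simpa using dotProduct_mulVec_neg_of_transpose_mulVec_eq_s10 hnormal hmult hJΔz
  have hderiv := hder.hasDerivAt_half_norm_sq_comp_add_smul Δz
  rw [hJ'] at hderiv
  simp only [hf]
  simpa using hderiv.exists_armijo_step hdescent hc1

/-- Theorem 1 (global convergence of BVNLLS): let `r` be differentiable at `z` with derivative
`x ↦ Jx`, with `J` of full column rank, and set `b = r(z)`, `f(x) = (1/2)‖r(x)‖²`. If the KKT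
conditions of the BVLS subproblem `min_{p−z ≤ Δẑ ≤ q−z} ‖JΔẑ + b‖²` hold at `Δz ≠ 0` with
multipliers `Λ_p, Λ_q` and `p ≤ z ≤ q`, then for every `c ∈ (0,1)` there exists a step size
`α ∈ (0,1]` achieving the Armijo decrease `f(z + α·Δz) − f(z) < c·α·⟨r(z), JΔz⟩`. -/
theorem bvnlls_global_convergence (n m : ℕ)
    (r : EuclideanSpace ℝ (Fin n) → EuclideanSpace ℝ (Fin m))
    (z : EuclideanSpace ℝ (Fin n))
    (J : Matrix (Fin m) (Fin n) ℝ)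
    (J' : EuclideanSpace ℝ (Fin n) →L[ℝ] EuclideanSpace ℝ (Fin m))
    (hJ' : ∀ x, J' x = toEuc (J.mulVec x))
    (hder : HasFDerivAt r J' z)
    (hrank : Function.Injective fun x : Fin n → ℝ => J.mulVec x)
    (b : EuclideanSpace ℝ (Fin m)) (hb : b = r z)
    (f : EuclideanSpace ℝ (Fin n) → ℝ) (hf : ∀ x, f x = (1 / 2 : ℝ) * ‖r x‖ ^ 2)
    (p q Δz Λp Λq : EuclideanSpace ℝ (Fin n))
    (hbox : ∀ j, p j ≤ z j ∧ z j ≤ q j)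
    (hstat : toEuc (Jᵀ.mulVec (toEuc (J.mulVec Δz) + b)) + Λq - Λp = 0)
    (hfeas : ∀ j, p j - z j ≤ Δz j ∧ Δz j ≤ q j - z j)
    (hΛp : ∀ j, 0 ≤ Λp j) (hΛq : ∀ j, 0 ≤ Λq j)
    (hcompq : ∀ j, Λq j * (Δz j - (q j - z j)) = 0)
    (hcompp : ∀ j, Λp j * ((p j - z j) - Δz j) = 0)
    (hΔz : Δz ≠ 0)
    (c : ℝ) (hc0 : 0 < c) (hc1 : c < 1) :
    ∃ α : ℝ, 0 < α ∧ α ≤ 1 ∧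
      f (z + α • Δz) - f z < c * α * ⟪r z, toEuc (J.mulVec Δz)⟫ :=
  bvnlls_global_convergence_general n m r z J J' hJ' hder hrank b hb f hf p q Δz Λp Λq hbox hstat
    hΛp hΛq hcompq hcompp hΔz c hc1
end

section
/- Let M : Fin n₂ → ℝ^{n₁} be a family of vectors (the columns of a full-column-rank matrix, n₁ ≥ n₂). Then for every index i, the support of the i-th Gram–Schmidt vector is contained in the union of the supports of the first i+1 columns: supp(gramSchmidt ℝ M i) ⊆ ⋃_{j ≤ i} supp(M j). Moreover supp(gramSchmidt ℝ M 0) = supp(M 0). -/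
instance (priority := high) finWellFoundedLT (n : ℕ) : WellFoundedLT (Fin n) :=
  inferInstance

def supp {k : ℕ} (x : EuclideanSpace ℝ (Fin k)) : Set (Fin k) := {t | x t ≠ 0}

/-!
Each Gram–Schmidt vector `Q'ᵢ` lies in the span of `M₀, …, Mᵢ`, and taking linear
combinations never creates new nonzero entries. For `i = 0` there is nothing to subtract,
so `Q'₀ = M₀`.
-/

section Support

variable {k : ℕ}

@[simp]
lemma supp_zero : supp (0 : EuclideanSpace ℝ (Fin k)) = ∅ := by
  ext t
  simp [supp]

lemma supp_add_subset (x y : EuclideanSpace ℝ (Fin k)) : supp (x + y) ⊆ supp x ∪ supp y := by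
  intro t ht
  by_contra h
  simp_all [supp]

lemma supp_smul_subset (a : ℝ) (x : EuclideanSpace ℝ (Fin k)) : supp (a • x) ⊆ supp x := by
  intro t ht
  simp_all [supp]

lemma supp_subset_of_mem_span {S : Set (EuclideanSpace ℝ (Fin k))}
    {x : EuclideanSpace ℝ (Fin k)} (hx : x ∈ Submodule.span ℝ S) :
    supp x ⊆ ⋃ s ∈ S, supp s := by
  induction hx using Submodule.span_induction with
  | mem s hs => exact Set.subset_biUnion_of_mem hs
  | zero => simp
  | add x y _ _ hx hy => exact (supp_add_subset x y).trans (Set.union_subset hx hy)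
  | smul a x _ hx => exact (supp_smul_subset a x).trans hx

end Support

theorem gramSchmidt_support_subset_general (n₁ n₂ : ℕ) [NeZero n₂]
    (M : Fin n₂ → EuclideanSpace ℝ (Fin n₁)) :
    (∀ i : Fin n₂, supp (InnerProductSpace.gramSchmidt ℝ M i) ⊆ ⋃ j ∈ Set.Iic i, supp (M j)) ∧
      supp (InnerProductSpace.gramSchmidt ℝ M 0) = supp (M 0) := by
  refine ⟨fun i => ?_, ?_⟩
  · rw [← Set.biUnion_image (f := M) (g := supp)]
    exact supp_subset_of_mem_span (InnerProductSpace.gramSchmidt_mem_span ℝ M le_rfl)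
  · rw [InnerProductSpace.gramSchmidt_def, ← bot_eq_zero, Finset.Iio_bot, Finset.sum_empty,
      sub_zero]

/-- Theorem 2: for the columns `M` of a full-column-rank matrix (`n₁ ≥ n₂`), the support of
the `i`-th Gram–Schmidt vector is contained in the union of the supports of the first `i+1`
columns, and the support of the first Gram–Schmidt vector equals the support of the first
column. -/
theorem gramSchmidt_support_subset (n₁ n₂ : ℕ) [NeZero n₂] (hn : n₂ ≤ n₁)
    (M : Fin n₂ → EuclideanSpace ℝ (Fin n₁)) (hM : LinearIndependent ℝ M) :
    (∀ i : Fin n₂, supp (InnerProductSpace.gramSchmidt ℝ M i) ⊆ ⋃ j ∈ Set.Iic i, supp (M j)) ∧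
      supp (InnerProductSpace.gramSchmidt ℝ M 0) = supp (M 0) :=
  gramSchmidt_support_subset_general n₁ n₂ M
end

section
/- Let M : Fin n₂ → ℝ^{n₁} be a linearly independent family of vectors, and let i, j' be indices such that (⋃_{j ≤ j'} supp(M j)) ∩ supp(M i) = ∅. Then ⟨gramSchmidtNormed ℝ M j, M i⟩ = 0 for every j ≤ j'; that is, the entries R(j, i) = ⟨Q_j, M_i⟩ of the R-factor of the thin QR factorization vanish for all j ≤ j'. -/
open scoped RealInnerProductSpace

open InnerProductSpace Submodule

theorem inner_eq_zero_of_disjoint_supp {k : ℕ} {x y : EuclideanSpace ℝ (Fin k)}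
    (h : Disjoint (supp x) (supp y)) : ⟪x, y⟫ = 0 := by
  rw [PiLp.inner_apply]
  refine Finset.sum_eq_zero fun t _ => ?_
  by_cases hx : x t = 0
  · simp [hx]
  · have hy : y t = 0 := not_not.1 fun hy => Set.disjoint_left.1 h hx hy
    simp [hy]

theorem inner_left_eq_zero_of_mem_span {𝕜 E : Type*} [RCLike 𝕜] [NormedAddCommGroup E]
    [InnerProductSpace 𝕜 E] {s : Set E} {x y : E} (hs : ∀ v ∈ s, inner 𝕜 v y = 0)
    (hx : x ∈ span 𝕜 s) : inner 𝕜 x y = 0 := by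
  have hle : span 𝕜 s ≤ (𝕜 ∙ y)ᗮ :=
    span_le.2 fun v hv => mem_orthogonal_singleton_iff_inner_left.2 (hs v hv)
  exact mem_orthogonal_singleton_iff_inner_left.1 (hle hx)

theorem gramSchmidtNormed_mem_span {𝕜 E ι : Type*} [RCLike 𝕜] [NormedAddCommGroup E]
    [InnerProductSpace 𝕜 E] [LinearOrder ι] [LocallyFiniteOrderBot ι] [WellFoundedLT ι]
    (f : ι → E) {i j : ι} (hij : i ≤ j) : gramSchmidtNormed 𝕜 f i ∈ span 𝕜 (f '' Set.Iic j) :=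
  smul_mem _ _ (gramSchmidt_mem_span 𝕜 f hij)

theorem qr_R_entries_vanish_general (n₁ n₂ : ℕ)
    (M : Fin n₂ → EuclideanSpace ℝ (Fin n₁))
    (i j' : Fin n₂)
    (hdisj : (⋃ j ∈ Set.Iic j', supp (M j)) ∩ supp (M i) = ∅) :
    ∀ j ≤ j', ⟪InnerProductSpace.gramSchmidtNormed ℝ M j, M i⟫ = 0 := by
  intro j hj
  refine inner_left_eq_zero_of_mem_span ?_ (gramSchmidtNormed_mem_span M hj)
  rintro _ ⟨k, hk, rfl⟩
  refine inner_eq_zero_of_disjoint_supp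
    (Disjoint.mono_left ?_ (Set.disjoint_iff_inter_eq_empty.2 hdisj))
  exact Set.subset_biUnion_of_mem (u := fun j => supp (M j)) hk

/-- Corollary 1: for a linearly independent family `M`, if the cumulative support of the
columns `M_0, …, M_{j'}` is disjoint from the support of column `M_i`, then the R-factor
entries `R(j, i) = ⟨Q_j, M_i⟩` of the thin QR factorization vanish for all `j ≤ j'`. -/
theorem qr_R_entries_vanish (n₁ n₂ : ℕ)
    (M : Fin n₂ → EuclideanSpace ℝ (Fin n₁)) (hM : LinearIndependent ℝ M)
    (i j' : Fin n₂)
    (hdisj : (⋃ j ∈ Set.Iic j', supp (M j)) ∩ supp (M i) = ∅) :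
    ∀ j ≤ j', ⟪InnerProductSpace.gramSchmidtNormed ℝ M j, M i⟫ = 0 :=
  qr_R_entries_vanish_general n₁ n₂ M i j' hdisj
end

section
/- Let M : Fin k → ℝ^{m} be a family of vectors, A ⊆ Fin m a set of row indices, and F : Fin k → Fin m a map such that supp(M j) ∩ A ⊆ {F j} for every j. Then for every row index t ∈ A that is not in the range of F, one has (gramSchmidt ℝ M j)(t) = 0 for every j; i.e., the row t of the Q-factor is identically zero. -/
/-! Gram–Schmidt only forms linear combinations of the input vectors, so any subspace
containing all of them (here: the vectors with a zero in row `t`) contains its output. -/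

namespace InnerProductSpace

theorem gramSchmidt_mem_of_forall_mem {𝕜 E ι : Type*} [RCLike 𝕜] [NormedAddCommGroup E]
    [InnerProductSpace 𝕜 E] [LinearOrder ι] [LocallyFiniteOrderBot ι] [WellFoundedLT ι]
    {f : ι → E} {p : Submodule 𝕜 E} (hf : ∀ i, f i ∈ p) (n : ι) :
    gramSchmidt 𝕜 f n ∈ p :=
  Submodule.span_le.mpr (Set.image_subset_iff.mpr fun i _ => hf i)
    (gramSchmidt_mem_span 𝕜 f le_rfl)

end InnerProductSpace

theorem apply_eq_zero_of_supp_inter_subset_singleton {m : ℕ} {x : EuclideanSpace ℝ (Fin m)}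
    {A : Set (Fin m)} {s t : Fin m} (hx : supp x ∩ A ⊆ {s}) (htA : t ∈ A) (hts : t ≠ s) :
    x t = 0 :=
  not_not.mp fun hxt => hts (hx ⟨hxt, htA⟩)

/-- First part of Corollary 3: if within the rows `A` each column `M j` has at most one
nonzero entry, in row `F j`, then every row `t ∈ A` not of the form `F j` is identically
zero in the Q-factor (Gram–Schmidt vectors) of the matrix with columns `M`. -/
theorem gramSchmidt_unselected_rows_zero (k m : ℕ)
    (M : Fin k → EuclideanSpace ℝ (Fin m)) (A : Set (Fin m)) (F : Fin k → Fin m)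
    (hsupp : ∀ j, supp (M j) ∩ A ⊆ {F j}) :
    ∀ t ∈ A, t ∉ Set.range F → ∀ j, InnerProductSpace.gramSchmidt ℝ M j t = 0 := by
  intro t htA htF j
  have hM : ∀ i, M i ∈ LinearMap.ker (EuclideanSpace.projₗ (𝕜 := ℝ) t) := fun i =>
    LinearMap.mem_ker.mpr <|
      apply_eq_zero_of_supp_inter_subset_singleton (hsupp i) htA fun h => htF ⟨i, h.symm⟩
  exact LinearMap.mem_ker.mp (InnerProductSpace.gramSchmidt_mem_of_forall_mem hM j)
end
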